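/- Let n ≥ 1 and R = C[x1,…,x_{2n+1}] ⊗ Λ(η1,…,η_{2n+1}). Define D12 = ∂_{x_{2n+1}}∂_{η_{2n+1}} + Σ_{i=1}^{n}(∂_{x_i}∂_{η_{2n+1−i}} − ∂_{x_{2n+1−i}}∂_{η_i}). For d ≥ 0 and ℓ > 1, the vector ω̃_{d,n+ℓ} = x1^d x_{2n+1}^ℓ Γ([n]) − ℓ x1^d x_{2n+1}^{ℓ−1} η_{2n+1} η_1⋯η_n satisfies D12 ω̃_{d,n+ℓ} = −ℓ(ℓ−1) x1^d x_{2n+1}^{ℓ−2} η_1⋯η_n ≠ 0. In particular ω̃_{d,n+ℓ} is not D12-harmonic for ℓ ≥ 2. -/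

import Mathlib

/-!
Write elements of `R` as sums of `p ⊗ η_L`. Every term `∂_{x_i}∂_{η_j}` of `D₁₂` other than
`∂_{x_{2n+1}}∂_{η_{2n+1}}` involves an index `k` with `n < k ≤ 2n` (0-based: `n ≤ k < 2n`), and
neither summand of `ω̃` involves such an index, so `D₁₂` acts on `ω̃` as `∂_{x_{2n+1}}∂_{η_{2n+1}}`.
This kills `x₁^d x_{2n+1}^ℓ Γ([n])`, which contains no `η_{2n+1}`, and sends
`x₁^d x_{2n+1}^{ℓ-1} η_{2n+1} η₁⋯η_n` to `(ℓ-1) x₁^d x_{2n+1}^{ℓ-2} η₁⋯η_n`. The result is nonzero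
because contracting away `η₁, …, η_n` leaves the nonzero polynomial `x₁^d x_{2n+1}^{ℓ-2}`.
-/

open scoped TensorProduct

noncomputable section

/-- Polynomial part `ℂ[x₁,…,x_m]`. -/
abbrev PolyPart (m : ℕ) := MvPolynomial (Fin m) ℂ

/-- Exterior part `Λ(η₁,…,η_m)`. -/
abbrev ExtPart (m : ℕ) := ExteriorAlgebra ℂ (Fin m → ℂ)

/-- The supersymmetric algebra `R = ℂ[x₁,…,x_m] ⊗ Λ(η₁,…,η_m)`. -/
abbrev SAlg (m : ℕ) := PolyPart m ⊗[ℂ] ExtPart m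

/-- The even generator `x_i`. -/
def Xv {m : ℕ} (i : Fin m) : SAlg m := (MvPolynomial.X i) ⊗ₜ[ℂ] 1

/-- The odd generator `η_i`. -/
def ηv {m : ℕ} (i : Fin m) : SAlg m :=
  1 ⊗ₜ[ℂ] (ExteriorAlgebra.ι ℂ (Pi.single i 1))

/-- The partial derivative `∂_{x_i}` (acting on the polynomial factor). -/
def dX {m : ℕ} (i : Fin m) : SAlg m →ₗ[ℂ] SAlg m :=
  LinearMap.rTensor (ExtPart m) (MvPolynomial.pderiv i).toLinearMap

/-- The odd left superderivation `∂_{η_i}` with `∂_{η_i}(η_j) = δ_{ij}`, realized as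
left contraction of the exterior factor with the `i`-th coordinate functional. -/
def dη {m : ℕ} (i : Fin m) : SAlg m →ₗ[ℂ] SAlg m :=
  LinearMap.lTensor (PolyPart m)
    (CliffordAlgebra.contractLeft (LinearMap.proj i : (Fin m → ℂ) →ₗ[ℂ] ℂ))

/-- Multiplication by `x_i`. -/
def mX {m : ℕ} (i : Fin m) : SAlg m →ₗ[ℂ] SAlg m := LinearMap.mulLeft ℂ (Xv i)

/-- Multiplication by `η_i`. -/
def mη {m : ℕ} (i : Fin m) : SAlg m →ₗ[ℂ] SAlg m := LinearMap.mulLeft ℂ (ηv i)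

/-- Ordered product `η_{i₁}⋯η_{i_r}` over a list of indices. -/
def ηProdList {m : ℕ} (l : List (Fin m)) : SAlg m := (l.map ηv).prod

/-- The product `η₁η₂⋯η_k` of the first `k` odd generators. -/
def ηTake (m k : ℕ) : SAlg m := ηProdList ((List.finRange m).take k)

/-- `Γ([k]) = Σ_{j=1}^{k} (−1)^{j−1} x_j η₁⋯η̂_j⋯η_k` (0-indexed internally). -/
def GammaK (m k : ℕ) : SAlg m :=
  ∑ j ∈ Finset.range k,
    if h : j < m then
      ((-1 : ℂ) ^ j) •
        (Xv ⟨j, h⟩ *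
          ηProdList (((List.finRange m).take k).filter (fun a => (a : ℕ) ≠ j)))
    else 0

/-- `D₁₂ = ∂_{x_{2n+1}}∂_{η_{2n+1}} + Σ_{i=1}^{n}(∂_{x_i}∂_{η_{2n+1−i}} − ∂_{x_{2n+1−i}}∂_{η_i})`. -/
def D12g (n : ℕ) : SAlg (2*n+1) →ₗ[ℂ] SAlg (2*n+1) :=
  dX (Fin.last (2*n)) ∘ₗ dη (Fin.last (2*n)) +
    ∑ i : Fin n,
      (dX ⟨i.1, by have := i.2; omega⟩ ∘ₗ dη ⟨2*n-1-i.1, by omega⟩ -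
       dX ⟨2*n-1-i.1, by omega⟩ ∘ₗ dη ⟨i.1, by have := i.2; omega⟩)

/-- `D₂₂ = ∂_{x_{2n+1}}² + 2Σ_{i=1}^{n}∂_{η_i}∂_{η_{2n+1−i}}`. -/
def D22g (n : ℕ) : SAlg (2*n+1) →ₗ[ℂ] SAlg (2*n+1) :=
  dX (Fin.last (2*n)) ∘ₗ dX (Fin.last (2*n)) +
    (2 : ℂ) • ∑ i : Fin n,
      dη ⟨i.1, by have := i.2; omega⟩ ∘ₗ dη ⟨2*n-1-i.1, by omega⟩

/-- The vector `ω̃_{d,n+ℓ} = x₁^d x_{2n+1}^ℓ Γ([n]) − ℓ x₁^d x_{2n+1}^{ℓ−1} η_{2n+1} η₁⋯η_n`. -/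
def omegaTilde (n d l : ℕ) : SAlg (2*n+1) :=
  (Xv (⟨0, by omega⟩ : Fin (2*n+1))) ^ d * (Xv (Fin.last (2*n))) ^ l * GammaK (2*n+1) n -
    (l : ℂ) • ((Xv (⟨0, by omega⟩ : Fin (2*n+1))) ^ d * (Xv (Fin.last (2*n))) ^ (l - 1) *
      ηv (Fin.last (2*n)) * ηTake (2*n+1) n)

open MvPolynomial CliffordAlgebra

section Exterior

variable {m : ℕ}

def eProdList (L : List (Fin m)) : ExtPart m :=
  (L.map fun i => ExteriorAlgebra.ι ℂ (Pi.single i (1 : ℂ))).prod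

@[simp]
lemma eProdList_nil : eProdList ([] : List (Fin m)) = 1 := rfl

lemma eProdList_cons (a : Fin m) (L : List (Fin m)) :
    eProdList (a :: L) = ExteriorAlgebra.ι ℂ (Pi.single a 1) * eProdList L := by
  simp [eProdList]

lemma contractLeft_proj_ι_mul (k a : Fin m) (e : ExtPart m) :
    contractLeft (LinearMap.proj k) (ExteriorAlgebra.ι ℂ (Pi.single a 1) * e)
      = (if k = a then e else 0) - ExteriorAlgebra.ι ℂ (Pi.single a 1) *
          contractLeft (LinearMap.proj k) e := by
  rw [contractLeft_ι_mul]
  split_ifs with h <;> simp [h]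

lemma contractLeft_proj_eProdList_of_notMem {k : Fin m} {L : List (Fin m)} (h : k ∉ L) :
    contractLeft (LinearMap.proj k) (eProdList L) = 0 := by
  induction L with
  | nil => simp
  | cons a L ih =>
    rw [List.mem_cons, not_or] at h
    rw [eProdList_cons, contractLeft_proj_ι_mul, if_neg h.1, ih h.2]
    simp

lemma contractLeft_proj_eProdList_cons {a : Fin m} {L : List (Fin m)} (h : a ∉ L) :
    contractLeft (LinearMap.proj a) (eProdList (a :: L)) = eProdList L := by
  rw [eProdList_cons, contractLeft_proj_ι_mul, if_pos rfl,
    contractLeft_proj_eProdList_of_notMem h, mul_zero, sub_zero]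

lemma tmul_eProdList_ne_zero {p : PolyPart m} (hp : p ≠ 0) {L : List (Fin m)} (hL : L.Nodup) :
    p ⊗ₜ[ℂ] eProdList L ≠ 0 := by
  induction L with
  | nil =>
    intro h
    have := congrArg ((TensorProduct.rid ℂ (PolyPart m)).toLinearMap ∘ₗ
      LinearMap.lTensor (PolyPart m) ExteriorAlgebra.algebraMapInv.toLinearMap) h
    simp [hp] at this
  | cons a L ih =>
    intro h
    rw [List.nodup_cons] at hL
    have := congrArg (LinearMap.lTensor (PolyPart m) (contractLeft (LinearMap.proj a))) h
    rw [LinearMap.lTensor_tmul, contractLeft_proj_eProdList_cons hL.1, map_zero] at this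
    exact ih hL.2 this

end Exterior

lemma lt_of_mem_take_finRange {m k : ℕ} {a : Fin m} (ha : a ∈ (List.finRange m).take k) :
    a.1 < k := by
  obtain ⟨i, hi, rfl⟩ := List.mem_iff_getElem.1 ha
  simp only [List.length_take, List.length_finRange, lt_inf_iff] at hi
  simpa using hi.1

section Pderiv

variable {σ R : Type*} [CommSemiring R] {a b k : σ}

lemma pderiv_X_pow_of_ne (h : a ≠ k) (d : ℕ) : pderiv k (X a ^ d : MvPolynomial σ R) = 0 := by
  simp [pderiv_X_of_ne h]

lemma pderiv_X_pow_mul_X_pow_of_ne (ha : a ≠ k) (hb : b ≠ k) (d e : ℕ) :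
    pderiv k (X a ^ d * X b ^ e : MvPolynomial σ R) = 0 := by
  rw [Derivation.leibniz, pderiv_X_pow_of_ne ha, pderiv_X_pow_of_ne hb, smul_zero, smul_zero,
    add_zero]

end Pderiv

section SAlg

variable {m : ℕ}

lemma ηProdList_eq_one_tmul (L : List (Fin m)) : ηProdList L = 1 ⊗ₜ[ℂ] eProdList L := by
  induction L with
  | nil => rfl
  | cons a L ih =>
    rw [ηProdList, List.map_cons, List.prod_cons, ← ηProdList, ih, eProdList_cons, ηv,
      Algebra.TensorProduct.tmul_mul_tmul, one_mul]

lemma Xv_pow_mul_Xv_pow (a b : Fin m) (d e : ℕ) :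
    Xv a ^ d * Xv b ^ e = (X a ^ d * X b ^ e : PolyPart m) ⊗ₜ[ℂ] 1 := by
  rw [Xv, Xv, Algebra.TensorProduct.tmul_pow, Algebra.TensorProduct.tmul_pow,
    Algebra.TensorProduct.tmul_mul_tmul, one_pow, one_pow, one_mul]

lemma dX_tmul (i : Fin m) (p : PolyPart m) (e : ExtPart m) :
    dX i (p ⊗ₜ[ℂ] e) = pderiv i p ⊗ₜ[ℂ] e := rfl

lemma dη_tmul (i : Fin m) (p : PolyPart m) (e : ExtPart m) :
    dη i (p ⊗ₜ[ℂ] e) = p ⊗ₜ[ℂ] contractLeft (LinearMap.proj i) e := rfl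

lemma dX_dη_comm (i j : Fin m) (v : SAlg m) : dX i (dη j v) = dη j (dX i v) := by
  simp only [dX, dη, ← LinearMap.comp_apply, LinearMap.rTensor_comp_lTensor,
    LinearMap.lTensor_comp_rTensor]

end SAlg

lemma D12g_apply_of_middle_eq_zero (n : ℕ) (v : SAlg (2*n+1))
    (hX : ∀ k : Fin (2*n+1), n ≤ k.1 → k.1 < 2*n → dX k v = 0)
    (hη : ∀ k : Fin (2*n+1), n ≤ k.1 → k.1 < 2*n → dη k v = 0) :
    D12g n v = dX (Fin.last (2*n)) (dη (Fin.last (2*n)) v) := by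
  have hpair : ∀ i : Fin n,
      dX ⟨i.1, by have := i.2; omega⟩ (dη ⟨2*n-1-i.1, by omega⟩ v)
        - dX ⟨2*n-1-i.1, by omega⟩ (dη ⟨i.1, by have := i.2; omega⟩ v) = 0 := fun i => by
    have := i.2
    rw [hη ⟨2*n-1-i.1, by omega⟩ (by simp; omega) (by simp; omega), dX_dη_comm,
      hX ⟨2*n-1-i.1, by omega⟩ (by simp; omega) (by simp; omega), map_zero, map_zero, sub_zero]
  simp only [D12g, LinearMap.add_apply, LinearMap.sum_apply, LinearMap.sub_apply,
    LinearMap.comp_apply, hpair, Finset.sum_const_zero, add_zero]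

section D12

variable {n : ℕ} {p : PolyPart (2*n+1)} {L : List (Fin (2*n+1))}

lemma last_notMem_of_lt (hL : ∀ a ∈ L, a.1 < n) : Fin.last (2*n) ∉ L :=
  fun h => by have := hL _ h; simp at this; omega

lemma D12g_tmul_eProdList (hp : ∀ k : Fin (2*n+1), n ≤ k.1 → k.1 < 2*n → pderiv k p = 0)
    (hL : ∀ a ∈ L, a.1 < n) :
    D12g n (p ⊗ₜ[ℂ] eProdList L) = 0 := by
  rw [D12g_apply_of_middle_eq_zero n _ (fun k hk _ => by rw [dX_tmul, hp k hk ‹_›,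
      TensorProduct.zero_tmul])
    (fun k hk _ => by rw [dη_tmul, contractLeft_proj_eProdList_of_notMem
      (fun h => by have := hL k h; omega), TensorProduct.tmul_zero]),
    dη_tmul, contractLeft_proj_eProdList_of_notMem (last_notMem_of_lt hL),
    TensorProduct.tmul_zero, map_zero]

lemma D12g_tmul_eProdList_last_cons
    (hp : ∀ k : Fin (2*n+1), n ≤ k.1 → k.1 < 2*n → pderiv k p = 0)
    (hL : ∀ a ∈ L, a.1 < n) :
    D12g n (p ⊗ₜ[ℂ] eProdList (Fin.last (2*n) :: L))
      = pderiv (Fin.last (2*n)) p ⊗ₜ[ℂ] eProdList L := by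
  have hη : ∀ k : Fin (2*n+1), n ≤ k.1 → k.1 < 2*n →
      contractLeft (LinearMap.proj k) (eProdList (Fin.last (2*n) :: L)) = 0 := fun k hk hk' => by
    rw [eProdList_cons, contractLeft_proj_ι_mul,
      if_neg (Fin.ne_of_val_ne (by simp; omega)),
      contractLeft_proj_eProdList_of_notMem (fun h => by have := hL k h; omega)]
    simp
  rw [D12g_apply_of_middle_eq_zero n _ (fun k hk _ => by rw [dX_tmul, hp k hk ‹_›,
      TensorProduct.zero_tmul])
    (fun k hk hk' => by rw [dη_tmul, hη k hk hk', TensorProduct.tmul_zero]),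
    dη_tmul, contractLeft_proj_eProdList_cons (last_notMem_of_lt hL), dX_tmul]

end D12

lemma D12g_Xv_pow_mul_GammaK (n d l : ℕ) :
    D12g n (Xv (⟨0, by omega⟩ : Fin (2*n+1)) ^ d * Xv (Fin.last (2*n)) ^ l * GammaK (2*n+1) n)
      = 0 := by
  rw [GammaK, Finset.mul_sum, map_sum]
  refine Finset.sum_eq_zero fun j hj => ?_
  have hjn : j < n := Finset.mem_range.1 hj
  rw [dif_pos (by omega), mul_smul_comm, map_smul, ηProdList_eq_one_tmul, Xv_pow_mul_Xv_pow]
  simp only [Xv, Algebra.TensorProduct.tmul_mul_tmul, one_mul, mul_one]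
  rw [D12g_tmul_eProdList, smul_zero]
  · intro k hk hk'
    rw [Derivation.leibniz, pderiv_X_of_ne (Fin.ne_of_val_ne (by simp; omega)),
      pderiv_X_pow_mul_X_pow_of_ne (Fin.ne_of_val_ne (by simp; omega))
        (Fin.ne_of_val_ne (by simp; omega)), smul_zero, smul_zero, add_zero]
  · intro a ha
    exact lt_of_mem_take_finRange (List.mem_filter.1 ha).1

lemma D12g_Xv_pow_mul_ηv_last_mul_ηTake {n : ℕ} (hn : 0 < n) (d e : ℕ) :
    D12g n (Xv (⟨0, by omega⟩ : Fin (2*n+1)) ^ d * Xv (Fin.last (2*n)) ^ e *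
        ηv (Fin.last (2*n)) * ηTake (2*n+1) n)
      = (e : ℂ) • (Xv (⟨0, by omega⟩ : Fin (2*n+1)) ^ d * Xv (Fin.last (2*n)) ^ (e - 1) *
        ηTake (2*n+1) n) := by
  have h0 : (⟨0, by omega⟩ : Fin (2*n+1)) ≠ Fin.last (2*n) := Fin.ne_of_val_ne (by simp; omega)
  simp only [ηTake, ηProdList_eq_one_tmul, Xv_pow_mul_Xv_pow, ηv,
    Algebra.TensorProduct.tmul_mul_tmul, mul_one, one_mul, ← eProdList_cons]
  rw [D12g_tmul_eProdList_last_cons, TensorProduct.smul_tmul']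
  · rw [Derivation.leibniz, pderiv_X_pow_of_ne h0, smul_zero, add_zero, pderiv_pow, pderiv_X_self,
      mul_one, smul_eq_mul, smul_eq_C_mul, map_natCast, mul_left_comm]
  · intro k hk hk'
    exact pderiv_X_pow_mul_X_pow_of_ne (Fin.ne_of_val_ne (by simp; omega))
      (Fin.ne_of_val_ne (by simp; omega)) d e
  · exact fun a ha => lt_of_mem_take_finRange ha

lemma D12g_omegaTilde {n : ℕ} (hn : 0 < n) (d : ℕ) {l : ℕ} (hl : 1 ≤ l) :
    D12g n (omegaTilde n d l)
      = (-((l : ℂ) * ((l : ℂ) - 1))) •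
          (Xv (⟨0, by omega⟩ : Fin (2*n+1)) ^ d * Xv (Fin.last (2*n)) ^ (l - 2) *
            ηTake (2*n+1) n) := by
  rw [omegaTilde, map_sub, map_smul, D12g_Xv_pow_mul_GammaK,
    D12g_Xv_pow_mul_ηv_last_mul_ηTake hn, smul_smul, zero_sub, ← neg_smul,
    show l - 1 - 1 = l - 2 by omega, Nat.cast_sub hl, Nat.cast_one]

lemma Xv_pow_mul_Xv_pow_mul_ηTake_ne_zero {m : ℕ} (a b : Fin m) (d e k : ℕ) :
    Xv a ^ d * Xv b ^ e * ηTake m k ≠ 0 := by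
  rw [ηTake, ηProdList_eq_one_tmul, Xv_pow_mul_Xv_pow, Algebra.TensorProduct.tmul_mul_tmul,
    one_mul, mul_one]
  exact tmul_eProdList_ne_zero (mul_ne_zero (pow_ne_zero _ (X_ne_zero _))
    (pow_ne_zero _ (X_ne_zero _))) ((List.take_sublist _ _).nodup (List.nodup_finRange _))

/-- for `n ≥ 1`, `d ≥ 0` and `ℓ > 1`,
`D₁₂ ω̃_{d,n+ℓ} = −ℓ(ℓ−1) x₁^d x_{2n+1}^{ℓ−2} η₁⋯η_n ≠ 0`;
in particular `ω̃_{d,n+ℓ}` is not `D₁₂`-harmonic. -/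
theorem stmt8 (n d l : ℕ) (hn : 1 ≤ n) (hl : 1 < l) :
    D12g n (omegaTilde n d l)
      = (-((l : ℂ) * ((l : ℂ) - 1))) •
          ((Xv (⟨0, by omega⟩ : Fin (2*n+1))) ^ d * (Xv (Fin.last (2*n))) ^ (l - 2) *
            ηTake (2*n+1) n) ∧
    D12g n (omegaTilde n d l) ≠ 0 := by
  have hD := D12g_omegaTilde hn d hl.le
  have hl0 : (l : ℂ) ≠ 0 := Nat.cast_ne_zero.2 (by omega)
  have hl1 : (l : ℂ) - 1 ≠ 0 := sub_ne_zero.2 (by exact_mod_cast hl.ne')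
  exact ⟨hD, hD ▸ smul_ne_zero (neg_ne_zero.2 (mul_ne_zero hl0 hl1))
    (Xv_pow_mul_Xv_pow_mul_ηTake_ne_zero _ _ _ _ _)⟩
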